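/- Let α_h > 0 and let T₁ be the first-order differential operator T₁ = −(α_h u² − v²)∂ᵤ − (α_h+1) u v ∂ᵥ + (1−h) u z ∂_z on the region {v ≠ 0}. Fix p, q, α, β with β = α_h p − (1−h)q and a constant c₁ > 0, and define φ(u,v,z) = (r^p z^q / (C^{-2}+1)^{β/2}) |r/v|^{β} + c₁ r^p z^q |r/v|^{β} ∫_{u/|v|}^{1/C} (t²+1)^{(α−β−1)/2} dt, where r = √(u²+v²) and C > 0. Then on {v ≠ 0}: T₁ φ = −c₁ r^{p+1} z^{q} |r/v|^{α}, and φ = r^p z^q on the surface {u = |v|/C}. -/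

import Mathlib

open Real

noncomputable def pdu (f : ℝ → ℝ → ℝ → ℝ) : ℝ → ℝ → ℝ → ℝ :=
  fun u v z => deriv (fun u' => f u' v z) u

noncomputable def pdv (f : ℝ → ℝ → ℝ → ℝ) : ℝ → ℝ → ℝ → ℝ :=
  fun u v z => deriv (fun v' => f u v' z) v

noncomputable def pdz (f : ℝ → ℝ → ℝ → ℝ) : ℝ → ℝ → ℝ → ℝ :=
  fun u v z => deriv (fun z' => f u v z') z

/-- The transport operator `T₁ = −(α_h u² − v²)∂ᵤ − (α_h+1)uv∂ᵥ + (1−h)uz∂_z`. -/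
noncomputable def T1op (h : ℝ) (f : ℝ → ℝ → ℝ → ℝ) (u v z : ℝ) : ℝ :=
  -((1/3 + 2*h/3) * u ^ 2 - v ^ 2) * pdu f u v z
    - ((1/3 + 2*h/3) + 1) * u * v * pdv f u v z
    + (1 - h) * u * z * pdz f u v z

/-!
`T1op h` is a derivation. The prefactor `P = r^p z^q |r/v|^β` has logarithmic `T₁`-derivative
`u (β - α_h p + (1 - h) q)`, which vanishes by the choice of `β`, so `T₁ φ = P · T₁ (ψ (u/|v|))`
with `ψ` the constant plus the integral. Since `T₁ (u/|v|) = r²/|v|`, the fundamental theorem of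
calculus gives `T₁ φ = -c₁ P ((u/|v|)² + 1)^((α-β-1)/2) r²/|v|`, and `(u/|v|)² + 1 = |r/v|²`
turns this into the stated right-hand side. On `u = |v|/C` the integral is empty and
`|r/v|^β = (C⁻² + 1)^(β/2)`.
-/

-- Only the three partial derivatives are required to exist, as in `pdu`, `pdv`, `pdz`.
def HasDerivAlong (X : ℝ → ℝ → ℝ → ℝ × ℝ × ℝ) (f : ℝ → ℝ → ℝ → ℝ) (T u v z : ℝ) : Prop :=
  ∃ fu fv fz, HasDerivAt (fun u' => f u' v z) fu u ∧ HasDerivAt (fun v' => f u v' z) fv v ∧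
    HasDerivAt (fun z' => f u v z') fz z ∧
    (X u v z).1 * fu + (X u v z).2.1 * fv + (X u v z).2.2 * fz = T

def HasLogDerivAlong (X : ℝ → ℝ → ℝ → ℝ × ℝ × ℝ) (f : ℝ → ℝ → ℝ → ℝ) (c u v z : ℝ) : Prop :=
  HasDerivAlong X f (c * f u v z) u v z

section DerivAlong

variable {X : ℝ → ℝ → ℝ → ℝ × ℝ × ℝ} {f g : ℝ → ℝ → ℝ → ℝ} {S T c d u v z : ℝ}

theorem hasDerivAlong_fst : HasDerivAlong X (fun u _ _ => u) (X u v z).1 u v z :=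
  ⟨1, 0, 0, hasDerivAt_id' u, hasDerivAt_const v u, hasDerivAt_const z u, by ring⟩

theorem hasDerivAlong_snd : HasDerivAlong X (fun _ v _ => v) (X u v z).2.1 u v z :=
  ⟨0, 1, 0, hasDerivAt_const u v, hasDerivAt_id' v, hasDerivAt_const z v, by ring⟩

theorem hasDerivAlong_thd : HasDerivAlong X (fun _ _ z => z) (X u v z).2.2 u v z :=
  ⟨0, 0, 1, hasDerivAt_const u z, hasDerivAt_const v z, hasDerivAt_id' z, by ring⟩

theorem HasDerivAlong.congr_deriv (hf : HasDerivAlong X f S u v z) (h : S = T) :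
    HasDerivAlong X f T u v z :=
  h ▸ hf

theorem HasDerivAlong.add (hf : HasDerivAlong X f S u v z) (hg : HasDerivAlong X g T u v z) :
    HasDerivAlong X (fun u v z => f u v z + g u v z) (S + T) u v z := by
  obtain ⟨fu, fv, fz, hfu, hfv, hfz, rfl⟩ := hf
  obtain ⟨gu, gv, gz, hgu, hgv, hgz, rfl⟩ := hg
  exact ⟨_, _, _, hfu.add hgu, hfv.add hgv, hfz.add hgz, by ring⟩

theorem HasDerivAlong.mul (hf : HasDerivAlong X f S u v z) (hg : HasDerivAlong X g T u v z) :
    HasDerivAlong X (fun u v z => f u v z * g u v z) (S * g u v z + f u v z * T) u v z := by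
  obtain ⟨fu, fv, fz, hfu, hfv, hfz, rfl⟩ := hf
  obtain ⟨gu, gv, gz, hgu, hgv, hgz, rfl⟩ := hg
  exact ⟨_, _, _, hfu.mul hgu, hfv.mul hgv, hfz.mul hgz, by ring⟩

theorem HasDerivAlong.div (hf : HasDerivAlong X f S u v z) (hg : HasDerivAlong X g T u v z)
    (hg₀ : g u v z ≠ 0) :
    HasDerivAlong X (fun u v z => f u v z / g u v z)
      ((S * g u v z - f u v z * T) / g u v z ^ 2) u v z := by
  obtain ⟨fu, fv, fz, hfu, hfv, hfz, rfl⟩ := hf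
  obtain ⟨gu, gv, gz, hgu, hgv, hgz, rfl⟩ := hg
  exact ⟨_, _, _, hfu.div hgu hg₀, hfv.div hgv hg₀, hfz.div hgz hg₀, by ring⟩

theorem HasDerivAt.comp_hasDerivAlong {ψ : ℝ → ℝ} {ψ' : ℝ} (hψ : HasDerivAt ψ ψ' (f u v z))
    (hf : HasDerivAlong X f T u v z) :
    HasDerivAlong X (fun u v z => ψ (f u v z)) (ψ' * T) u v z := by
  obtain ⟨fu, fv, fz, hfu, hfv, hfz, rfl⟩ := hf
  exact ⟨_, _, _, hψ.comp u hfu, hψ.comp v hfv, hψ.comp z hfz, by ring⟩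

theorem HasLogDerivAlong.mul (hf : HasLogDerivAlong X f c u v z)
    (hg : HasLogDerivAlong X g d u v z) :
    HasLogDerivAlong X (fun u v z => f u v z * g u v z) (c + d) u v z :=
  (HasDerivAlong.mul hf hg).congr_deriv (by ring)

theorem HasLogDerivAlong.div (hf : HasLogDerivAlong X f c u v z)
    (hg : HasLogDerivAlong X g d u v z) (hg₀ : g u v z ≠ 0) :
    HasLogDerivAlong X (fun u v z => f u v z / g u v z) (c - d) u v z :=
  (HasDerivAlong.div hf hg hg₀).congr_deriv (by field_simp)

theorem HasLogDerivAlong.rpow_const (hf : HasLogDerivAlong X f c u v z) (hf₀ : 0 < f u v z)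
    (γ : ℝ) : HasLogDerivAlong X (fun u v z => f u v z ^ γ) (γ * c) u v z :=
  ((Real.hasDerivAt_rpow_const (Or.inl hf₀.ne')).comp_hasDerivAlong hf).congr_deriv <| by
    rw [Real.rpow_sub_one hf₀.ne']
    field_simp

theorem HasLogDerivAlong.sqrt (hf : HasLogDerivAlong X f c u v z) (hf₀ : 0 < f u v z) :
    HasLogDerivAlong X (fun u v z => √(f u v z)) (c / 2) u v z :=
  ((Real.hasDerivAt_sqrt hf₀.ne').comp_hasDerivAlong hf).congr_deriv <| by
    have hs : √(f u v z) ≠ 0 := (Real.sqrt_pos.2 hf₀).ne'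
    field_simp
    rw [Real.sq_sqrt hf₀.le]
    ring

theorem HasLogDerivAlong.abs (hf : HasLogDerivAlong X f c u v z) (hf₀ : f u v z ≠ 0) :
    HasLogDerivAlong X (fun u v z => |f u v z|) c u v z :=
  ((hasDerivAt_abs hf₀).comp_hasDerivAlong hf).congr_deriv <| by
    rw [mul_left_comm, sign_mul_self]

end DerivAlong

noncomputable def T1field (h u v z : ℝ) : ℝ × ℝ × ℝ :=
  (-((1/3 + 2*h/3) * u ^ 2 - v ^ 2), -((1/3 + 2*h/3) + 1) * u * v, (1 - h) * u * z)

section T1field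

variable {h : ℝ} {f : ℝ → ℝ → ℝ → ℝ} {T u v z : ℝ}

theorem HasDerivAlong.T1op_eq (hf : HasDerivAlong (T1field h) f T u v z) :
    T1op h f u v z = T := by
  obtain ⟨fu, fv, fz, hfu, hfv, hfz, rfl⟩ := hf
  simp only [T1op, pdu, pdv, pdz, hfu.deriv, hfv.deriv, hfz.deriv, T1field]
  ring

theorem hasLogDerivAlong_T1field_snd :
    HasLogDerivAlong (T1field h) (fun _ v _ => v) (-((1/3 + 2*h/3) + 1) * u) u v z :=
  hasDerivAlong_snd

theorem hasLogDerivAlong_T1field_thd :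
    HasLogDerivAlong (T1field h) (fun _ _ z => z) ((1 - h) * u) u v z :=
  hasDerivAlong_thd

theorem hasLogDerivAlong_T1field_sq_add_sq :
    HasLogDerivAlong (T1field h) (fun u v _ => u ^ 2 + v ^ 2) (-2 * (1/3 + 2*h/3) * u) u v z :=
  (((hasDerivAt_pow 2 u).comp_hasDerivAlong hasDerivAlong_fst).add
    ((hasDerivAt_pow 2 v).comp_hasDerivAlong hasDerivAlong_snd)).congr_deriv
    (by simp only [T1field]; ring)

theorem hasDerivAlong_T1field_prefactor {p q β : ℝ}
    (hrel : β = (1/3 + 2*h/3) * p - (1 - h) * q) (hv : v ≠ 0) (hz : 0 < z) :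
    HasDerivAlong (T1field h)
      (fun u v z => √(u ^ 2 + v ^ 2) ^ p * z ^ q * |√(u ^ 2 + v ^ 2) / v| ^ β) 0 u v z := by
  have hw : 0 < u ^ 2 + v ^ 2 := by positivity
  have hr : HasLogDerivAlong (T1field h) (fun u v _ => √(u ^ 2 + v ^ 2))
      (-2 * (1/3 + 2*h/3) * u / 2) u v z :=
    hasLogDerivAlong_T1field_sq_add_sq.sqrt hw
  have hρ₀ : √(u ^ 2 + v ^ 2) / v ≠ 0 := div_ne_zero (Real.sqrt_pos.2 hw).ne' hv
  have hρ := ((hr.div hasLogDerivAlong_T1field_snd hv).abs hρ₀).rpow_const (abs_pos.2 hρ₀) β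
  have hzq := (hasLogDerivAlong_T1field_thd (h := h) (u := u) (v := v)).rpow_const hz q
  refine HasDerivAlong.congr_deriv (((hr.rpow_const (Real.sqrt_pos.2 hw) p).mul hzq).mul hρ) ?_
  rw [hrel]
  ring

theorem hasDerivAlong_T1field_div_abs (hv : v ≠ 0) :
    HasDerivAlong (T1field h) (fun u v _ => u / |v|) ((u ^ 2 + v ^ 2) / |v|) u v z :=
  (hasDerivAlong_fst.div (hasLogDerivAlong_T1field_snd.abs hv) (abs_ne_zero.2 hv)).congr_deriv
    (by simp only [T1field]; field_simp; ring)

end T1field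

theorem Continuous.hasDerivAt_intervalIntegral_lower {g : ℝ → ℝ} (hg : Continuous g) (b x : ℝ) :
    HasDerivAt (fun x => ∫ t in x..b, g t) (-g x) x :=
  intervalIntegral.integral_hasDerivAt_left (hg.intervalIntegrable _ _)
    (hg.stronglyMeasurableAtFilter _ _) hg.continuousAt

theorem abs_sqrt_div_rpow {u v : ℝ} (hv : v ≠ 0) (γ : ℝ) :
    |√(u ^ 2 + v ^ 2) / v| ^ γ = ((u / |v|) ^ 2 + 1) ^ (γ / 2) := by
  have hsq : (u / |v|) ^ 2 + 1 = |√(u ^ 2 + v ^ 2) / v| ^ 2 := by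
    rw [sq_abs, div_pow, div_pow, sq_abs, Real.sq_sqrt (by positivity)]
    field_simp
  rw [hsq, ← Real.rpow_natCast_mul (abs_nonneg _)]
  push_cast
  ring_nf

theorem transport_source_eq {u v z p q α β c₁ : ℝ} (hv : v ≠ 0) :
    √(u ^ 2 + v ^ 2) ^ p * z ^ q * |√(u ^ 2 + v ^ 2) / v| ^ β
        * (c₁ * -((u / |v|) ^ 2 + 1) ^ ((α - β - 1) / 2) * ((u ^ 2 + v ^ 2) / |v|))
      = -c₁ * √(u ^ 2 + v ^ 2) ^ (p + 1) * z ^ q * |√(u ^ 2 + v ^ 2) / v| ^ α := by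
  have hr : 0 < √(u ^ 2 + v ^ 2) := Real.sqrt_pos.2 (by positivity)
  have hρ : 0 < |√(u ^ 2 + v ^ 2) / v| := abs_pos.2 (div_ne_zero hr.ne' hv)
  have hw : (u ^ 2 + v ^ 2) / |v| = √(u ^ 2 + v ^ 2) * |√(u ^ 2 + v ^ 2) / v| := by
    rw [abs_div, abs_of_pos hr, ← mul_div_assoc, Real.mul_self_sqrt (by positivity)]
  have hα : |√(u ^ 2 + v ^ 2) / v| ^ α
      = |√(u ^ 2 + v ^ 2) / v| ^ β * |√(u ^ 2 + v ^ 2) / v| ^ (α - β - 1)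
        * |√(u ^ 2 + v ^ 2) / v| := by
    rw [← Real.rpow_add hρ, ← Real.rpow_add_one hρ.ne']
    ring_nf
  rw [← abs_sqrt_div_rpow hv, hw, hα, Real.rpow_add_one hr.ne']
  ring

theorem solves_transport_R1_general (h C p q α β c₁ : ℝ)
    (hrel : β = (1/3 + 2*h/3) * p - (1 - h) * q)
    (φ : ℝ → ℝ → ℝ → ℝ)
    (hφ : φ = fun u v z =>
      (Real.sqrt (u ^ 2 + v ^ 2)) ^ p * z ^ q / (1/C ^ 2 + 1) ^ (β/2)
          * |Real.sqrt (u ^ 2 + v ^ 2) / v| ^ β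
        + c₁ * (Real.sqrt (u ^ 2 + v ^ 2)) ^ p * z ^ q
          * |Real.sqrt (u ^ 2 + v ^ 2) / v| ^ β
          * ∫ t in (u / |v|)..(1/C), (t ^ 2 + 1) ^ ((α - β - 1)/2)) :
    (∀ u v z : ℝ, v ≠ 0 → 0 < z →
      T1op h φ u v z =
        -c₁ * (Real.sqrt (u ^ 2 + v ^ 2)) ^ (p + 1) * z ^ q
          * |Real.sqrt (u ^ 2 + v ^ 2) / v| ^ α) ∧
    (∀ v z : ℝ, v ≠ 0 → 0 < z →
      φ (|v| / C) v z = (Real.sqrt ((|v| / C) ^ 2 + v ^ 2)) ^ p * z ^ q) := by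
  have hφ' : φ = fun u v z => √(u ^ 2 + v ^ 2) ^ p * z ^ q * |√(u ^ 2 + v ^ 2) / v| ^ β
      * (1 / (1 / C ^ 2 + 1) ^ (β / 2)
        + c₁ * ∫ t in (u / |v|)..(1 / C), (t ^ 2 + 1) ^ ((α - β - 1) / 2)) := by
    rw [hφ]; funext u v z; ring
  constructor
  · intro u v z hv hz
    have hg : Continuous fun t : ℝ => (t ^ 2 + 1) ^ ((α - β - 1) / 2) :=
      (by fun_prop : Continuous fun t : ℝ => t ^ 2 + 1).rpow_const fun _ => Or.inl (by positivity)
    have hψ := ((hg.hasDerivAt_intervalIntegral_lower (1 / C) (u / |v|)).const_mul c₁).const_add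
      (1 / (1 / C ^ 2 + 1) ^ (β / 2))
    rw [hφ', ((hasDerivAlong_T1field_prefactor hrel hv hz).mul
      (hψ.comp_hasDerivAlong (hasDerivAlong_T1field_div_abs hv))).T1op_eq, zero_mul, zero_add]
    exact transport_source_eq hv
  · intro v z hv _
    have hs : |v| / C / |v| = 1 / C := by rw [div_div_cancel_left' (abs_ne_zero.2 hv), one_div]
    have hX : (1 / C ^ 2 + 1 : ℝ) ^ (β / 2) ≠ 0 := by positivity
    rw [hφ']
    dsimp only
    rw [abs_sqrt_div_rpow hv, hs, intervalIntegral.integral_same, one_div_pow,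
      mul_zero, add_zero, mul_assoc, mul_one_div_cancel hX, mul_one]

/-- The explicit method-of-characteristics solution `φ₁` solves the transport PDE
`T₁φ = −c₁ r^{p+1} z^q |r/v|^α` with boundary data `r^p z^q` on `{u = |v|/C}`. -/
theorem solves_transport_R1 (h C p q α β c₁ : ℝ)
    (hh : h ∈ Set.Ioo (0:ℝ) 1) (hC : 0 < C)
    (hβ : 0 < β) (hβα : β < α) (hα : α < 1)
    (hrel : β = (1/3 + 2*h/3) * p - (1 - h) * q) (hc₁ : 0 < c₁)
    (φ : ℝ → ℝ → ℝ → ℝ)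
    (hφ : φ = fun u v z =>
      (Real.sqrt (u ^ 2 + v ^ 2)) ^ p * z ^ q / (1/C ^ 2 + 1) ^ (β/2)
          * |Real.sqrt (u ^ 2 + v ^ 2) / v| ^ β
        + c₁ * (Real.sqrt (u ^ 2 + v ^ 2)) ^ p * z ^ q
          * |Real.sqrt (u ^ 2 + v ^ 2) / v| ^ β
          * ∫ t in (u / |v|)..(1/C), (t ^ 2 + 1) ^ ((α - β - 1)/2)) :
    (∀ u v z : ℝ, v ≠ 0 → 0 < z →
      T1op h φ u v z =
        -c₁ * (Real.sqrt (u ^ 2 + v ^ 2)) ^ (p + 1) * z ^ q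
          * |Real.sqrt (u ^ 2 + v ^ 2) / v| ^ α) ∧
    (∀ v z : ℝ, v ≠ 0 → 0 < z →
      φ (|v| / C) v z = (Real.sqrt ((|v| / C) ^ 2 + v ^ 2)) ^ p * z ^ q) :=
  solves_transport_R1_general h C p q α β c₁ hrel φ hφ
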